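/- Let T: [0,p] → [0,p] be continuous, C¹ on (0,p), with DT(x) entrywise positive for 0 < x < p, DT(y) ⪇ DT(x) for 0 < x < y < p, Tp < p, T0 = 0, and suppose DT(0) := lim_{x→0⁺} DT(x) exists with spectral radius ρ(DT(0)) ≤ 1. Then Tⁿx → 0 as n → ∞ for every x ∈ [0,p]. -/

import Mathlib

/-!
Since `DT > 0` on the open box, `T` is monotone on `[0, p]`; as `T p < p`, the orbit of `p`
decreases to a fixed point `q`, and every orbit in `[0, p]` is squeezed between `0` and the
orbit of `p`. It remains to see `q = 0`. If not, positivity of `DT` forces `q` into the open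
box. Along the ray from `0` to `q` the mean value theorem and the monotone decrease of `DT`
give `q = T q ≤ J₀ q`, strictly in some coordinate because `DT` strictly decreases between
`q / 4` and `q / 2`. Then `r = J₀ q > 0` satisfies `r < J₀ r` in every coordinate, so
`‖J₀ ^ k‖` grows like `c ^ k` for some `c > 1`, and Gelfand's formula yields an eigenvalue of
`J₀` of modulus `> 1`.
-/

open Filter Set Topology Matrix

section Calculus

variable {ι : Type*} [Fintype ι]

theorem hasFDerivAt_mulVecLin_of_hasDerivAt_update [DecidableEq ι] {T : (ι → ℝ) → ι → ℝ}
    {x : ι → ℝ} {A : Matrix ι ι ℝ} (hT : DifferentiableAt ℝ T x)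
    (hA : ∀ j, HasDerivAt (fun t => T (Function.update x j t)) (fun i => A i j) (x j)) :
    HasFDerivAt T A.mulVecLin.toContinuousLinearMap x := by
  convert hT.hasFDerivAt
  refine ContinuousLinearMap.coe_injective (LinearMap.pi_ext' fun j => LinearMap.ext_ring ?_)
  have hcol := (hT.hasFDerivAt.comp_hasDerivAt_of_eq (x j) (hasDerivAt_update x j (x j))
    (Function.update_eq_self j x).symm).unique (hA j)
  simpa [funext_iff] using hcol.symm

theorem hasDerivAt_apply_add_smul {T : (ι → ℝ) → ι → ℝ} {A : Matrix ι ι ℝ} {u v : ι → ℝ}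
    {s : ℝ} (hT : HasFDerivAt T A.mulVecLin.toContinuousLinearMap (u + s • v)) :
    HasDerivAt (fun t => T (u + t • v)) (A *ᵥ v) s := by
  have h := hT.comp_hasDerivAt s (((hasDerivAt_id s).smul_const v).const_add u)
  simp only [one_smul] at h
  exact h

theorem sub_le_mul_sub_of_hasDerivAt_le {f f' : ℝ → ℝ} {a b C : ℝ} (hab : a ≤ b)
    (hf : ∀ s ∈ Icc a b, HasDerivAt f (f' s) s) (hC : ∀ s ∈ Icc a b, f' s ≤ C) :
    f b - f a ≤ C * (b - a) :=
  (convex_Icc a b).image_sub_le_mul_sub_of_deriv_le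
    (fun s hs => (hf s hs).continuousAt.continuousWithinAt)
    (fun s hs => (hf s (interior_subset hs)).differentiableAt.differentiableWithinAt)
    (fun s hs => (hf s (interior_subset hs)).deriv ▸ hC s (interior_subset hs))
    a ⟨le_rfl, hab⟩ b ⟨hab, le_rfl⟩ hab

theorem mul_sub_le_sub_of_le_hasDerivAt {f f' : ℝ → ℝ} {a b C : ℝ} (hab : a ≤ b)
    (hf : ∀ s ∈ Icc a b, HasDerivAt f (f' s) s) (hC : ∀ s ∈ Icc a b, C ≤ f' s) :
    C * (b - a) ≤ f b - f a :=
  (convex_Icc a b).mul_sub_le_image_sub_of_le_deriv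
    (fun s hs => (hf s hs).continuousAt.continuousWithinAt)
    (fun s hs => (hf s (interior_subset hs)).differentiableAt.differentiableWithinAt)
    (fun s hs => (hf s (interior_subset hs)).deriv ▸ hC s (interior_subset hs))
    a ⟨le_rfl, hab⟩ b ⟨hab, le_rfl⟩ hab

end Calculus

theorem exists_one_lt_smul_le {ι : Type*} [Finite ι] {r x : ι → ℝ} (hrx : ∀ i, r i < x i) :
    ∃ c : ℝ, 1 < c ∧ c • r ≤ x := by
  have hev : ∀ᶠ c in 𝓝[>] (1 : ℝ), ∀ i, c * r i < x i := eventually_all.2 fun i =>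
    ((tendsto_id.mul_const (r i)).eventually_lt_const (by simpa using hrx i)).filter_mono
      nhdsWithin_le_nhds
  obtain ⟨c, hc, hc1⟩ := (hev.and self_mem_nhdsWithin).exists
  exact ⟨c, hc1, fun i => (hc i).le⟩

theorem spectrum.eventually_norm_pow_lt_pow {A : Type*} [NormedRing A] [NormedAlgebra ℂ A]
    [CompleteSpace A] {a : A} {c : ℝ} (h : spectralRadius ℂ a < ENNReal.ofReal c) :
    ∀ᶠ k : ℕ in atTop, ‖a ^ k‖ < c ^ k := by
  filter_upwards [(spectrum.pow_norm_pow_one_div_tendsto_nhds_spectralRadius a).eventually_lt_const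
    h, eventually_ne_atTop 0] with k hk hk0
  have hroot : ‖a ^ k‖ ^ (k⁻¹ : ℝ) < c := by
    rw [← one_div]
    exact (ENNReal.ofReal_lt_ofReal_iff_of_nonneg (by positivity)).1 hk
  calc ‖a ^ k‖ = (‖a ^ k‖ ^ (k⁻¹ : ℝ)) ^ k := (Real.rpow_inv_natCast_pow (norm_nonneg _) hk0).symm
    _ < c ^ k := pow_lt_pow_left₀ hroot (by positivity) hk0

namespace Matrix

variable {ι : Type*} [Fintype ι] {A B : Matrix ι ι ℝ} {v w : ι → ℝ}

theorem mulVec_mono_of_nonneg (hA : ∀ i j, 0 ≤ A i j) (hvw : v ≤ w) : A *ᵥ v ≤ A *ᵥ w :=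
  fun i => Finset.sum_le_sum fun j _ => mul_le_mul_of_nonneg_left (hvw j) (hA i j)

theorem mulVec_le_mulVec_of_le (hAB : ∀ i j, A i j ≤ B i j) (hv : 0 ≤ v) : A *ᵥ v ≤ B *ᵥ v :=
  fun i => Finset.sum_le_sum fun j _ => mul_le_mul_of_nonneg_right (hAB i j) (hv j)

theorem mulVec_lt_mulVec_of_le_of_ne (hAB : ∀ i j, A i j ≤ B i j) (hne : A ≠ B)
    (hv : ∀ i, 0 < v i) : A *ᵥ v < B *ᵥ v := by
  obtain ⟨i, j, hij⟩ : ∃ i j, A i j < B i j := by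
    by_contra! h
    exact hne (Matrix.ext fun i j => (hAB i j).antisymm (h i j))
  exact Pi.lt_def.2 ⟨mulVec_le_mulVec_of_le hAB fun k => (hv k).le, i,
    Finset.sum_lt_sum (fun k _ => mul_le_mul_of_nonneg_right (hAB i k) (hv k).le)
      ⟨j, Finset.mem_univ j, mul_lt_mul_of_pos_right hij (hv j)⟩⟩

theorem mulVec_lt_mulVec_of_pos (hA : ∀ i j, 0 < A i j) (hvw : v < w) (i : ι) :
    (A *ᵥ v) i < (A *ᵥ w) i := by
  obtain ⟨hle, j, hj⟩ := Pi.lt_def.1 hvw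
  exact Finset.sum_lt_sum (fun k _ => mul_le_mul_of_nonneg_left (hle k) (hA i k).le)
    ⟨j, Finset.mem_univ j, mul_lt_mul_of_pos_left hj (hA i j)⟩

theorem pow_smul_le_pow_mulVec [DecidableEq ι] (hA : ∀ i j, 0 ≤ A i j) {c : ℝ} (hc : 0 ≤ c)
    (hcv : c • v ≤ A *ᵥ v) (k : ℕ) : c ^ k • v ≤ (A ^ k) *ᵥ v := by
  induction k with
  | zero => simp
  | succ k ih =>
    calc c ^ (k + 1) • v = c ^ k • (c • v) := by rw [pow_succ, mul_smul]
      _ ≤ c ^ k • (A *ᵥ v) := smul_le_smul_of_nonneg_left hcv (pow_nonneg hc k)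
      _ = A *ᵥ (c ^ k • v) := by rw [mulVec_smul]
      _ ≤ A *ᵥ ((A ^ k) *ᵥ v) := mulVec_mono_of_nonneg hA ih
      _ = (A ^ (k + 1)) *ᵥ v := by rw [mulVec_mulVec, pow_succ']

theorem exists_one_lt_norm_mem_spectrum_of_lt_mulVec [DecidableEq ι] [Nonempty ι]
    (hA : ∀ i j, 0 ≤ A i j) (hv : ∀ i, 0 < v i) (hAv : ∀ i, v i < (A *ᵥ v) i) :
    ∃ μ ∈ spectrum ℂ (A.map ((↑) : ℝ → ℂ)), 1 < ‖μ‖ := by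
  let _ : NormedRing (Matrix ι ι ℂ) := Matrix.linftyOpNormedRing
  let _ : NormedAlgebra ℂ (Matrix ι ι ℂ) := Matrix.linftyOpNormedAlgebra
  have : CompleteSpace (Matrix ι ι ℂ) := FiniteDimensional.complete ℂ _
  obtain ⟨c, hc1, hcv⟩ := exists_one_lt_smul_le hAv
  obtain ⟨c', hc'1, hc'c⟩ := exists_between hc1
  obtain ⟨i₀⟩ := ‹Nonempty ι›
  by_contra! hspec
  set Aℂ := A.map Complex.ofRealHom
  set R := ‖Complex.ofRealHom ∘ v‖
  have hρ : spectralRadius ℂ Aℂ < ENNReal.ofReal c' := by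
    refine (iSup₂_le fun μ hμ => ?_).trans_lt (ENNReal.one_lt_ofReal.2 hc'1)
    exact_mod_cast (hspec μ hμ : ‖μ‖ ≤ 1)
  have hgrowth : ∀ k, c ^ k * v i₀ ≤ ‖Aℂ ^ k‖ * R := fun k => by
    have hle := pow_smul_le_pow_mulVec hA (by linarith) hcv k i₀
    calc c ^ k * v i₀ ≤ ‖Complex.ofRealHom (((A ^ k) *ᵥ v) i₀)‖ := by
          simpa [abs_of_nonneg] using hle.trans (le_abs_self _)
      _ = ‖((A ^ k).map Complex.ofRealHom *ᵥ (Complex.ofRealHom ∘ v)) i₀‖ := by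
          rw [RingHom.map_mulVec]
      _ ≤ ‖(A ^ k).map Complex.ofRealHom *ᵥ (Complex.ofRealHom ∘ v)‖ := norm_le_pi_norm _ i₀
      _ ≤ ‖Aℂ ^ k‖ * R := by
          rw [← RingHom.mapMatrix_apply, map_pow]
          exact linfty_opNorm_mulVec _ _
  have hratio : ∀ᶠ k : ℕ in atTop, (c' / c) ^ k * R < v i₀ :=
    ((tendsto_pow_atTop_nhds_zero_of_lt_one (by positivity)
      ((div_lt_one (by linarith)).2 hc'c)).mul_const R).eventually_lt_const (by simpa using hv i₀)
  obtain ⟨k, hk, hkR⟩ := ((spectrum.eventually_norm_pow_lt_pow hρ).and hratio).exists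
  have := (hgrowth k).trans (mul_le_mul_of_nonneg_right hk.le (norm_nonneg _))
  rw [div_pow, div_mul_eq_mul_div, div_lt_iff₀ (by positivity)] at hkR
  linarith

end Matrix

section Orbit

variable {α : Type*} {T : α → α} {s : Set α}

theorem MonotoneOn.iterate [Preorder α] (hmono : MonotoneOn T s) (hmaps : MapsTo T s s) (k : ℕ) :
    MonotoneOn T^[k] s := by
  induction k with
  | zero => exact monotoneOn_id
  | succ k ih =>
    intro x hx y hy hxy
    rw [Function.iterate_succ_apply', Function.iterate_succ_apply']
    exact hmono (hmaps.iterate k hx) (hmaps.iterate k hy) (ih hx hy hxy)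

theorem exists_isFixedPt_tendsto_iterate [ConditionallyCompleteLattice α] [TopologicalSpace α]
    [InfConvergenceClass α] [T2Space α] {a b : α} (hab : a ≤ b) (hmono : MonotoneOn T (Icc a b))
    (hmaps : MapsTo T (Icc a b) (Icc a b)) (hcont : ContinuousOn T (Icc a b)) (hb : T b ≤ b) :
    ∃ q ∈ Icc a b, Function.IsFixedPt T q ∧ Tendsto (fun k => T^[k] b) atTop (𝓝 q) := by
  have hbmem : b ∈ Icc a b := ⟨hab, le_rfl⟩
  have hmem : ∀ k, T^[k] b ∈ Icc a b := fun k => hmaps.iterate k hbmem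
  have hanti : Antitone fun k => T^[k] b := antitone_nat_of_succ_le fun k => by
    rw [Function.iterate_succ_apply]
    exact (hmono.iterate hmaps k) (hmaps hbmem) hbmem hb
  have hbdd : BddBelow (range fun k => T^[k] b) := ⟨a, forall_mem_range.2 fun k => (hmem k).1⟩
  have hlim := tendsto_atTop_ciInf hanti hbdd
  have hq : ⨅ k, T^[k] b ∈ Icc a b := ⟨le_ciInf fun k => (hmem k).1, ciInf_le hbdd 0⟩
  refine ⟨_, hq, tendsto_nhds_unique (f := fun k => T (T^[k] b)) (l := atTop) ?_ ?_, hlim⟩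
  · exact (hcont _ hq).tendsto.comp (tendsto_nhdsWithin_iff.2 ⟨hlim, Eventually.of_forall hmem⟩)
  · simpa only [Function.comp_def, Function.iterate_succ_apply'] using
      hlim.comp (tendsto_add_atTop_nat 1)

end Orbit

section Box

variable {ι : Type*} {p : ι → ℝ}

-- Not `Ioo 0 p`: the strict order on `ι → ℝ` is not the componentwise one.
def openBox (p : ι → ℝ) : Set (ι → ℝ) := {x | ∀ i, 0 < x i ∧ x i < p i}

theorem openBox_eq_pi (p : ι → ℝ) : openBox p = univ.pi fun i => Ioo 0 (p i) := by
  ext x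
  simp [openBox]

theorem isOpen_openBox [Finite ι] : IsOpen (openBox p) := by
  rw [openBox_eq_pi]
  exact isOpen_set_pi finite_univ fun i _ => isOpen_Ioo

theorem convex_openBox : Convex ℝ (openBox p) := by
  rw [openBox_eq_pi]
  exact convex_pi fun i _ => convex_Ioo 0 (p i)

theorem openBox_subset_Icc : openBox p ⊆ Icc 0 p := fun _ hx =>
  ⟨fun i => (hx i).1.le, fun i => (hx i).2.le⟩

theorem smul_mem_openBox {y : ι → ℝ} (hy : y ∈ openBox p) {s : ℝ} (hs : s ∈ Ioc 0 1) :
    s • y ∈ openBox p := fun i => by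
  obtain ⟨hy0, hyp⟩ := hy i
  simp only [Pi.smul_apply, smul_eq_mul]
  constructor <;> nlinarith [hs.1, hs.2]

theorem add_smul_sub_mem_openBox {u c : ι → ℝ} (hu : u ∈ Icc 0 p) (hc : c ∈ openBox p) {t : ℝ}
    (ht : t ∈ Ioc 0 1) : u + t • (c - u) ∈ openBox p := fun i => by
  obtain ⟨hc0, hcp⟩ := hc i
  have hu0 : 0 ≤ u i := hu.1 i
  have hup : u i ≤ p i := hu.2 i
  simp only [Pi.add_apply, Pi.smul_apply, Pi.sub_apply, smul_eq_mul]
  constructor <;> nlinarith [ht.1, ht.2]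

end Box

theorem ContinuousOn.tendsto_apply_add_smul_sub {E F : Type*} [AddCommGroup E] [Module ℝ E]
    [TopologicalSpace E] [ContinuousAdd E] [ContinuousSMul ℝ E] [TopologicalSpace F]
    {s : Set E} {T : E → F} (hT : ContinuousOn T s) (hs : Convex ℝ s) {x c : E} (hx : x ∈ s)
    (hc : c ∈ s) : Tendsto (fun t : ℝ => T (x + t • (c - x))) (𝓝[>] 0) (𝓝 (T x)) := by
  have hline : Tendsto (fun t : ℝ => x + t • (c - x)) (𝓝[>] 0) (𝓝 x) :=
    ((continuous_const.add (continuous_id.smul continuous_const)).tendsto' 0 x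
      (by simp)).mono_left nhdsWithin_le_nhds
  refine (hT x hx).tendsto.comp (tendsto_nhdsWithin_iff.2 ⟨hline, ?_⟩)
  filter_upwards [Ioc_mem_nhdsGT one_pos] with t ht
  exact hs.add_smul_sub_mem hx hc ⟨ht.1.le, ht.2⟩

def HasJacobianOn {ι : Type*} [Fintype ι] (T : (ι → ℝ) → ι → ℝ) (J : (ι → ℝ) → Matrix ι ι ℝ)
    (s : Set (ι → ℝ)) : Prop :=
  ∀ x ∈ s, HasFDerivAt T (J x).mulVecLin.toContinuousLinearMap x

def StrictAntiOnBox {ι : Type*} (p : ι → ℝ) (J : (ι → ℝ) → Matrix ι ι ℝ) : Prop :=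
  ∀ x y, (∀ i, 0 < x i) → (∀ i, x i < y i) → (∀ i, y i < p i) →
    (∀ i j, J y i j ≤ J x i j) ∧ J y ≠ J x

section Smith

variable {ι : Type*} {p : ι → ℝ} {T : (ι → ℝ) → ι → ℝ} {J : (ι → ℝ) → Matrix ι ι ℝ}
  {J0 : Matrix ι ι ℝ} {u v w y z q : ι → ℝ} {a b : ℝ}

theorem MonotoneOn.Icc_of_openBox (hp : ∀ i, 0 < p i) (hmono : MonotoneOn T (openBox p))
    (hcont : ContinuousOn T (Icc 0 p)) : MonotoneOn T (Icc 0 p) := by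
  intro u hu v hv huv
  have hc : (1 / 2 : ℝ) • p ∈ openBox p := fun i => by
    simp only [Pi.smul_apply, smul_eq_mul]
    constructor <;> linarith [hp i]
  have hlim : ∀ x ∈ Icc 0 p, Tendsto (fun t : ℝ => T (x + t • ((1 / 2 : ℝ) • p - x))) (𝓝[>] 0)
      (𝓝 (T x)) := fun x hx =>
    hcont.tendsto_apply_add_smul_sub (convex_Icc 0 p) hx (openBox_subset_Icc hc)
  refine le_of_tendsto_of_tendsto (hlim u hu) (hlim v hv) ?_
  filter_upwards [Ioc_mem_nhdsGT one_pos] with t ht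
  refine hmono (add_smul_sub_mem_openBox hu hc ht) (add_smul_sub_mem_openBox hv hc ht) fun i => ?_
  have := huv i
  simp only [Pi.add_apply, Pi.smul_apply, Pi.sub_apply, smul_eq_mul]
  nlinarith [ht.2]

theorem jacobian_le_of_tendsto (hJanti : StrictAntiOnBox p J)
    (hJ0 : Tendsto J (𝓝[openBox p] 0) (𝓝 J0)) (hz : z ∈ openBox p) (i j : ι) :
    J z i j ≤ J0 i j := by
  have hray : Tendsto (fun t : ℝ => t • z) (𝓝[>] 0) (𝓝[openBox p] 0) := by
    refine tendsto_nhdsWithin_iff.2 ⟨?_, ?_⟩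
    · exact ((continuous_id.smul continuous_const).tendsto' 0 0 (zero_smul ℝ z)).mono_left
        nhdsWithin_le_nhds
    · filter_upwards [Ioc_mem_nhdsGT one_pos] with t ht using smul_mem_openBox hz ht
  refine ge_of_tendsto (((continuous_id.matrix_elem i j).tendsto J0).comp (hJ0.comp hray)) ?_
  filter_upwards [Ioo_mem_nhdsGT one_pos] with t ht
  refine (hJanti _ _ (fun k => (smul_mem_openBox hz ⟨ht.1, ht.2.le⟩ k).1) (fun k => ?_)
    (fun k => (hz k).2)).1 i j
  simpa using mul_lt_of_lt_one_left (hz k).1 ht.2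

variable [Fintype ι]

theorem jacobian_half_smul_mulVec_lt (hJanti : StrictAntiOnBox p J)
    (hJ0 : Tendsto J (𝓝[openBox p] 0) (𝓝 J0)) (hy : y ∈ openBox p) :
    J ((1 / 2 : ℝ) • y) *ᵥ y < J0 *ᵥ y := by
  have hhalf := smul_mem_openBox hy (s := 1 / 2) ⟨by norm_num, by norm_num⟩
  have hquarter := smul_mem_openBox hy (s := 1 / 4) ⟨by norm_num, by norm_num⟩
  have hJ0_quarter := jacobian_le_of_tendsto hJanti hJ0 hquarter
  obtain ⟨hle, hne⟩ := hJanti ((1 / 4 : ℝ) • y) ((1 / 2 : ℝ) • y) (fun i => (hquarter i).1)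
    (fun i => by simp only [Pi.smul_apply, smul_eq_mul]; linarith [(hy i).1])
    (fun i => (hhalf i).2)
  refine mulVec_lt_mulVec_of_le_of_ne (fun i j => (hle i j).trans (hJ0_quarter i j))
    (fun h => hne (Matrix.ext fun i j => (hle i j).antisymm ?_)) fun i => (hy i).1
  rw [← h] at hJ0_quarter
  exact hJ0_quarter i j

theorem HasJacobianOn.apply_add_smul_le (hT : HasJacobianOn T J (openBox p)) (hab : a ≤ b)
    (hmem : ∀ s ∈ Icc a b, u + s • v ∈ openBox p) (hw : ∀ s ∈ Icc a b, J (u + s • v) *ᵥ v ≤ w) :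
    T (u + b • v) ≤ T (u + a • v) + (b - a) • w := fun i => by
  have := sub_le_mul_sub_of_hasDerivAt_le hab
    (fun s hs => hasDerivAt_pi.1 (hasDerivAt_apply_add_smul (hT _ (hmem s hs))) i)
    (fun s hs => hw s hs i)
  simp only [Pi.add_apply, Pi.smul_apply, smul_eq_mul]
  linarith

theorem HasJacobianOn.le_apply_add_smul (hT : HasJacobianOn T J (openBox p)) (hab : a ≤ b)
    (hmem : ∀ s ∈ Icc a b, u + s • v ∈ openBox p) (hw : ∀ s ∈ Icc a b, w ≤ J (u + s • v) *ᵥ v) :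
    T (u + a • v) + (b - a) • w ≤ T (u + b • v) := fun i => by
  have := mul_sub_le_sub_of_le_hasDerivAt hab
    (fun s hs => hasDerivAt_pi.1 (hasDerivAt_apply_add_smul (hT _ (hmem s hs))) i)
    (fun s hs => hw s hs i)
  simp only [Pi.add_apply, Pi.smul_apply, smul_eq_mul]
  linarith

theorem HasJacobianOn.monotoneOn_openBox (hT : HasJacobianOn T J (openBox p))
    (hJ : ∀ x ∈ openBox p, ∀ i j, 0 ≤ J x i j) : MonotoneOn T (openBox p) := by
  intro u hu v hv huv
  have hmem : ∀ s ∈ Icc (0 : ℝ) 1, u + s • (v - u) ∈ openBox p := fun s hs =>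
    convex_openBox.add_smul_sub_mem hu hv hs
  simpa using hT.le_apply_add_smul zero_le_one hmem (w := 0) fun s hs => by
    simpa using mulVec_mono_of_nonneg (hJ _ (hmem s hs)) (sub_nonneg.2 huv)

theorem HasJacobianOn.apply_le_mulVec (hT : HasJacobianOn T J (openBox p))
    (hcont : ContinuousOn T (Icc 0 p)) (hT0 : T 0 = 0) (hJanti : StrictAntiOnBox p J)
    (hJ0 : Tendsto J (𝓝[openBox p] 0) (𝓝 J0)) (hy : y ∈ openBox p) : T y ≤ J0 *ᵥ y := by
  have hseg : ∀ a ∈ Ioc (0 : ℝ) 1, T y ≤ T (a • y) + (1 - a) • (J0 *ᵥ y) := fun a ha => by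
    have hmem : ∀ s ∈ Icc a 1, 0 + s • y ∈ openBox p := fun s hs => by
      simpa using smul_mem_openBox hy ⟨ha.1.trans_le hs.1, hs.2⟩
    simpa using hT.apply_add_smul_le ha.2 hmem fun s hs =>
      mulVec_le_mulVec_of_le (jacobian_le_of_tendsto hJanti hJ0 (hmem s hs)) fun i => (hy i).1.le
  have hlim : Tendsto (fun a : ℝ => T (a • y) + (1 - a) • (J0 *ᵥ y)) (𝓝[>] 0)
      (𝓝 (J0 *ᵥ y)) := by
    have hT_ray := hcont.tendsto_apply_add_smul_sub (convex_Icc 0 p)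
      ⟨le_rfl, fun i => (hy i).1.le.trans (hy i).2.le⟩ (openBox_subset_Icc hy)
    have hcoef : Tendsto (fun a : ℝ => 1 - a) (𝓝[>] 0) (𝓝 1) :=
      ((continuous_sub_left 1).tendsto' 0 1 (sub_zero 1)).mono_left nhdsWithin_le_nhds
    simpa [hT0] using hT_ray.add (hcoef.smul_const (J0 *ᵥ y))
  refine ge_of_tendsto hlim ?_
  filter_upwards [Ioc_mem_nhdsGT one_pos] with a ha using hseg a ha

theorem HasJacobianOn.apply_le_apply_half_smul_add (hT : HasJacobianOn T J (openBox p))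
    (hJanti : StrictAntiOnBox p J) (hy : y ∈ openBox p) :
    T y ≤ T ((1 / 2 : ℝ) • y) + (1 / 2 : ℝ) • (J ((1 / 2 : ℝ) • y) *ᵥ y) := by
  have hmem : ∀ s ∈ Icc (1 / 2 : ℝ) 1, s • y ∈ openBox p := fun s hs =>
    smul_mem_openBox hy ⟨by linarith [hs.1], hs.2⟩
  have hseg := hT.apply_add_smul_le (u := 0) (v := y) (w := J ((1 / 2 : ℝ) • y) *ᵥ y)
    (a := 1 / 2) (b := 1) (by norm_num)
    (fun s hs => by simpa using hmem s hs) fun s hs => by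
      rw [zero_add]
      refine mulVec_le_mulVec_of_le ?_ fun i => (hy i).1.le
      rcases hs.1.eq_or_lt with rfl | hlt
      · exact fun i j => le_rfl
      · refine (hJanti _ _ (fun i => (hmem _ ⟨le_rfl, by norm_num⟩ i).1) (fun i => ?_)
          (fun i => (hmem s hs i).2)).1
        simp only [Pi.smul_apply, smul_eq_mul]
        nlinarith [(hy i).1]
  norm_num at hseg
  exact hseg

theorem HasJacobianOn.half_smul_mulVec_le_apply (hT : HasJacobianOn T J (openBox p))
    (hmaps : MapsTo T (Icc 0 p) (Icc 0 p)) (hJanti : StrictAntiOnBox p J)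
    (hy : y ∈ openBox p) (hw : w ∈ openBox p) (hyw : ∀ i, y i < w i) :
    (1 / 2 : ℝ) • (J w *ᵥ y) ≤ T y := by
  have hmem : ∀ s ∈ Icc (1 / 2 : ℝ) 1, 0 + s • y ∈ openBox p := fun s hs => by
    simpa using smul_mem_openBox hy ⟨by linarith [hs.1], hs.2⟩
  have hseg := hT.le_apply_add_smul (by norm_num) hmem (w := J w *ᵥ y) fun s hs => by
    refine mulVec_le_mulVec_of_le (hJanti _ w (fun i => (hmem s hs i).1) (fun i => ?_)
      (fun i => (hw i).2)).1 fun i => (hy i).1.le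
    simpa using (mul_le_of_le_one_left (hy i).1.le hs.2).trans_lt (hyw i)
  have hT_half : 0 ≤ T ((1 / 2 : ℝ) • y) := by
    simpa using (hmaps (openBox_subset_Icc (hmem _ ⟨le_rfl, by norm_num⟩))).1
  intro i
  have := hseg i
  simp only [zero_add, one_smul, Pi.add_apply, Pi.smul_apply, smul_eq_mul] at this ⊢
  linarith [show 0 ≤ T ((1 / 2 : ℝ) • y) i from hT_half i]

theorem HasJacobianOn.mem_openBox_of_isFixedPt (hT : HasJacobianOn T J (openBox p))
    (hmaps : MapsTo T (Icc 0 p) (Icc 0 p)) (hcont : ContinuousOn T (Icc 0 p))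
    (hJpos : ∀ x ∈ openBox p, ∀ i j, 0 < J x i j) (hJanti : StrictAntiOnBox p J)
    (hq : q ∈ Icc 0 p) (hqp : ∀ i, q i < p i) (hTq : Function.IsFixedPt T q) (hq0 : q ≠ 0) :
    q ∈ openBox p := by
  set w : ι → ℝ := (1 / 2 : ℝ) • (q + p)
  have hqw : ∀ i, q i < w i := fun i => by
    simp only [w, Pi.smul_apply, Pi.add_apply, smul_eq_mul]
    linarith [hqp i]
  have hw : w ∈ openBox p := fun i => by
    have : 0 ≤ q i := hq.1 i
    simp only [w, Pi.smul_apply, Pi.add_apply, smul_eq_mul]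
    constructor <;> linarith [hqp i]
  have hlim : Tendsto (fun t : ℝ => (1 / 2 : ℝ) • (J w *ᵥ (q + t • (w - q)))) (𝓝[>] 0)
      (𝓝 ((1 / 2 : ℝ) • (J w *ᵥ q))) :=
    ((J w).mulVecLin.continuous_of_finiteDimensional.const_smul (1 / 2 : ℝ)).continuousOn
      |>.tendsto_apply_add_smul_sub convex_univ (mem_univ q) (mem_univ w)
  -- `½ J(w) y ≤ T y` at the interior points `y = q + t (w - q)`; let `t → 0⁺`.
  have hle : (1 / 2 : ℝ) • (J w *ᵥ q) ≤ T q := by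
    refine le_of_tendsto_of_tendsto hlim
      (hcont.tendsto_apply_add_smul_sub (convex_Icc 0 p) hq (openBox_subset_Icc hw)) ?_
    filter_upwards [Ioo_mem_nhdsGT one_pos] with t ht
    refine hT.half_smul_mulVec_le_apply hmaps hJanti
      (add_smul_sub_mem_openBox hq hw ⟨ht.1, ht.2.le⟩) hw fun i => ?_
    have := hqw i
    simp only [Pi.add_apply, Pi.smul_apply, Pi.sub_apply, smul_eq_mul]
    nlinarith [ht.2]
  refine fun i => ⟨?_, hqp i⟩
  have hpos := mulVec_lt_mulVec_of_pos (hJpos w hw) (lt_of_le_of_ne hq.1 hq0.symm) i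
  have := hle i
  rw [hTq.eq] at this
  simp only [mulVec_zero, Pi.zero_apply, Pi.smul_apply, smul_eq_mul] at hpos this
  linarith

theorem HasJacobianOn.lt_mulVec_of_isFixedPt (hT : HasJacobianOn T J (openBox p))
    (hcont : ContinuousOn T (Icc 0 p)) (hT0 : T 0 = 0) (hJanti : StrictAntiOnBox p J)
    (hJ0 : Tendsto J (𝓝[openBox p] 0) (𝓝 J0)) (hq : q ∈ openBox p)
    (hTq : Function.IsFixedPt T q) : q < J0 *ᵥ q := by
  have hhalf := smul_mem_openBox hq (s := 1 / 2) ⟨by norm_num, by norm_num⟩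
  have hfar := hT.apply_le_apply_half_smul_add hJanti hq
  have hnear : T ((1 / 2 : ℝ) • q) ≤ (1 / 2 : ℝ) • (J0 *ᵥ q) := by
    simpa [mulVec_smul] using hT.apply_le_mulVec hcont hT0 hJanti hJ0 hhalf
  have hstrict := jacobian_half_smul_mulVec_lt hJanti hJ0 hq
  rw [hTq.eq] at hfar
  obtain ⟨-, i, hi⟩ := Pi.lt_def.1 hstrict
  have hbound : ∀ j, q j ≤ (1 / 2) * (J0 *ᵥ q) j + (1 / 2) * (J ((1 / 2 : ℝ) • q) *ᵥ q) j :=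
    fun j => by
      have h1 := hfar j
      have h2 := hnear j
      simp only [Pi.add_apply, Pi.smul_apply, smul_eq_mul] at h1 h2
      linarith
  refine Pi.lt_def.2 ⟨fun j => ?_, i, ?_⟩
  · linarith [hbound j, hstrict.le j]
  · linarith [hbound i]

theorem HasJacobianOn.exists_one_lt_norm_mem_spectrum_of_isFixedPt [DecidableEq ι] [Nonempty ι]
    (hT : HasJacobianOn T J (openBox p)) (hcont : ContinuousOn T (Icc 0 p)) (hT0 : T 0 = 0)
    (hJpos : ∀ x ∈ openBox p, ∀ i j, 0 < J x i j) (hJanti : StrictAntiOnBox p J)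
    (hJ0 : Tendsto J (𝓝[openBox p] 0) (𝓝 J0)) (hq : q ∈ openBox p)
    (hTq : Function.IsFixedPt T q) : ∃ μ ∈ spectrum ℂ (J0.map ((↑) : ℝ → ℂ)), 1 < ‖μ‖ := by
  have hJ0pos : ∀ i j, 0 < J0 i j := fun i j =>
    (hJpos q hq i j).trans_le (jacobian_le_of_tendsto hJanti hJ0 hq i j)
  obtain ⟨i₀⟩ := ‹Nonempty ι›
  have hq0 : 0 < q := Pi.lt_def.2 ⟨fun i => (hq i).1.le, i₀, (hq i₀).1⟩
  refine exists_one_lt_norm_mem_spectrum_of_lt_mulVec (fun i j => (hJ0pos i j).le)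
    (fun i => ?_)
    (mulVec_lt_mulVec_of_pos hJ0pos (hT.lt_mulVec_of_isFixedPt hcont hT0 hJanti hJ0 hq hTq))
  simpa using mulVec_lt_mulVec_of_pos hJ0pos hq0 i

end Smith

/-- Smith's fixed point theorem for monotone concave maps, subcritical case:
if moreover `T 0 = 0` and the limit Jacobian `J₀ = lim_{x→0⁺} J x` exists
with spectral radius at most `1`, then all orbits of `T` in `[0,p]` converge
to `0`. -/
theorem stmt_11 (n : ℕ) (p : Fin n → ℝ) (hp : ∀ i, 0 < p i)
    (T : (Fin n → ℝ) → (Fin n → ℝ))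
    (hmaps : ∀ x ∈ Set.Icc 0 p, T x ∈ Set.Icc 0 p)
    (hcont : ContinuousOn T (Set.Icc 0 p))
    (hC1 : ContDiffOn ℝ 1 T {x | ∀ i, 0 < x i ∧ x i < p i})
    (J : (Fin n → ℝ) → Fin n → Fin n → ℝ)
    (hJ : ∀ x, (∀ i, 0 < x i ∧ x i < p i) → ∀ j : Fin n,
      HasDerivAt (fun t => T (Function.update x j t)) (fun i => J x i j) (x j))
    (hJpos : ∀ x, (∀ i, 0 < x i ∧ x i < p i) → ∀ i j, 0 < J x i j)
    (hJanti : ∀ x y, (∀ i, 0 < x i) → (∀ i, x i < y i) → (∀ i, y i < p i) →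
      (∀ i j, J y i j ≤ J x i j) ∧ J y ≠ J x)
    (hTp : ∀ i, T p i < p i)
    (hT0 : T 0 = 0)
    (J0 : Fin n → Fin n → ℝ)
    (hJ0 : Filter.Tendsto J
      (nhdsWithin 0 {x | ∀ i, 0 < x i ∧ x i < p i}) (nhds J0))
    (hρ : ∀ μ ∈ spectrum ℂ (Matrix.of fun i j => (J0 i j : ℂ)),
      ‖μ‖ ≤ 1) :
    ∀ x ∈ Set.Icc (0 : Fin n → ℝ) p,
      Filter.Tendsto (fun k => T^[k] x) Filter.atTop (nhds 0) := by
  have hT : HasJacobianOn T J (openBox p) := fun x hx =>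
    hasFDerivAt_mulVecLin_of_hasDerivAt_update
      (((hC1 x hx).contDiffAt (isOpen_openBox.mem_nhds hx)).differentiableAt one_ne_zero) (hJ x hx)
  have hmono : MonotoneOn T (Icc 0 p) :=
    (hT.monotoneOn_openBox fun x hx i j => (hJpos x hx i j).le).Icc_of_openBox hp hcont
  have hp0 : (0 : Fin n → ℝ) ≤ p := fun i => (hp i).le
  obtain ⟨q, hq, hTq, hlim⟩ :=
    exists_isFixedPt_tendsto_iterate hp0 hmono hmaps hcont fun i => (hTp i).le
  have hq0 : q = 0 := by
    by_contra hq0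
    obtain ⟨i, -⟩ := Function.ne_iff.1 hq0
    have : Nonempty (Fin n) := ⟨i⟩
    have hqp : ∀ i, q i < p i := fun i =>
      (hTq.eq ▸ hmono hq ⟨hp0, le_rfl⟩ hq.2 i).trans_lt (hTp i)
    obtain ⟨μ, hμ, hμ1⟩ := hT.exists_one_lt_norm_mem_spectrum_of_isFixedPt hcont hT0 hJpos hJanti
      hJ0 (hT.mem_openBox_of_isFixedPt hmaps hcont hJpos hJanti hq hqp hTq hq0) hTq
    exact (hρ μ hμ).not_gt hμ1
  intro x hx
  rw [hq0] at hlim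
  refine tendsto_pi_nhds.2 fun i => tendsto_of_tendsto_of_tendsto_of_le_of_le tendsto_const_nhds
    (tendsto_pi_nhds.1 hlim i) (fun k => (MapsTo.iterate hmaps k hx).1 i)
    fun k => hmono.iterate hmaps k hx ⟨hp0, le_rfl⟩ hx.2 i
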